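/- Suppose x : ℝ → ℝ is differentiable and satisfies x'(t) ≥ -d(t)·x(t) + b(t) for all t ≥ t₀, where d, b : ℝ → ℝ are continuous with b ≥ 0, and x(t₀) ≥ 0. If h solves h'(t) = -d(t)·h(t) + b(t) with h(t₀) = 0, then x(t) ≥ h(t) for all t ≥ t₀. -/
import Mathlib


theorem comparison_with_inhomogeneous_solution
    (d b : ℝ → ℝ) (hd : Continuous d) (hb : Continuous b)
    (hbnn : ∀ t, 0 ≤ b t)
    (x x' : ℝ → ℝ) (t₀ : ℝ)
    (hxderiv : ∀ t, HasDerivAt x (x' t) t)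
    (hxineq : ∀ t, t₀ ≤ t → -d t * x t + b t ≤ x' t)
    (hx0 : 0 ≤ x t₀)
    (h : ℝ → ℝ)
    (hhderiv : ∀ t, HasDerivAt h (-d t * h t + b t) t)
    (hh0 : h t₀ = 0) :
    ∀ t, t₀ ≤ t → h t ≤ x t := by
  set F : ℝ → ℝ := fun t => ∫ u in t₀..t, d u with hFdef
  have hF : ∀ t, HasDerivAt F (d t) t := by
    intro t
    exact intervalIntegral.integral_hasDerivAt_right
      (hd.intervalIntegrable _ _) (hd.stronglyMeasurableAtFilter _ _)
      hd.continuousAt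
  set E : ℝ → ℝ := fun t => Real.exp (F t) with hEdef
  have hEpos : ∀ t, 0 < E t := fun t => Real.exp_pos _
  have hE : ∀ t, HasDerivAt E (d t * E t) t := by
    intro t
    simpa [hEdef, mul_comm] using (hF t).exp
  set v : ℝ → ℝ := fun t => (x t - h t) * E t with hvdef
  have hv : ∀ t, HasDerivAt v
      ((x' t - (-d t * h t + b t)) * E t + (x t - h t) * (d t * E t)) t := by
    intro t
    exact ((hxderiv t).sub (hhderiv t)).mul (hE t)
  have hmono : MonotoneOn v (Set.Ici t₀) := by
    apply monotoneOn_of_deriv_nonneg (convex_Ici t₀)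
    · intro t ht
      exact ((hv t).differentiableAt).continuousAt.continuousWithinAt
    · intro t ht
      exact ((hv t).differentiableAt).differentiableWithinAt
    · intro t ht
      rw [(hv t).deriv]
      rw [interior_Ici] at ht
      have h1 : -d t * x t + b t ≤ x' t := hxineq t (le_of_lt ht)
      have key : 0 ≤ (x' t + d t * x t - b t) * E t := by
        apply mul_nonneg _ (hEpos t).le
        nlinarith
      calc (0:ℝ) ≤ (x' t + d t * x t - b t) * E t := key
        _ = (x' t - (-d t * h t + b t)) * E t + (x t - h t) * (d t * E t) := by ring
  intro t ht
  have hv0 : 0 ≤ v t₀ := by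
    have : v t₀ = x t₀ * E t₀ := by simp [hvdef, hh0]
    rw [this]
    exact mul_nonneg hx0 (hEpos t₀).le
  have hvt : 0 ≤ v t := hv0.trans (hmono (Set.self_mem_Ici) ht ht)
  have hxh : 0 ≤ (x t - h t) * E t := by simpa [hvdef] using hvt
  nlinarith [hEpos t]
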